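/- arXiv:1412.4557 — 6 statements merged into one kernel-verified Lean document; each statement's English description precedes it below -/
import Mathlib

section
/- Let a, d be real numbers with a(a + d) < 0, set Ω = √(−a(a + d)), and let (x₀, y₀, z₀, w₀) ∈ ℝ⁴. Define x(t) = (1/(a + d))(w₀ + ((a + d)x₀ − w₀)cos(Ωt) − (Ω/a)(w₀ + a(y₀ − x₀))sin(Ωt)), y(t) = (1/(a(a + d)))((dw₀ + a(a + d)y₀)cos(Ωt) − dw₀ − Ω(dx₀ + ay₀)sin(Ωt)), z(t) = z₀, w(t) = w₀. Then (x, y, z, w) is the solution of the linear system ẋ = a(y − x) + w, ẏ = dx + ay, ż = 0, ẇ = 0 with initial condition (x₀, y₀, z₀, w₀), and this solution is periodic of period T = 2π/Ω, i.e., x(t + T) = x(t), y(t + T) = y(t) for all t ∈ ℝ. -/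
theorem chen_unperturbed_solution_periodic (a d : ℝ) (had : a * (a + d) < 0)
    (Ω : ℝ) (hΩ : Ω = Real.sqrt (-(a * (a + d))))
    (T : ℝ) (hT : T = 2 * Real.pi / Ω)
    (x₀ y₀ z₀ w₀ : ℝ) (x y z w : ℝ → ℝ)
    (hx : ∀ t, x t = (1 / (a + d)) * (w₀ + ((a + d) * x₀ - w₀) * Real.cos (Ω * t) -
      (Ω / a) * (w₀ + a * (y₀ - x₀)) * Real.sin (Ω * t)))
    (hy : ∀ t, y t = (1 / (a * (a + d))) * ((d * w₀ + a * (a + d) * y₀) * Real.cos (Ω * t)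
      - d * w₀ - Ω * (d * x₀ + a * y₀) * Real.sin (Ω * t)))
    (hz : ∀ t, z t = z₀) (hw : ∀ t, w t = w₀) :
    x 0 = x₀ ∧ y 0 = y₀ ∧ z 0 = z₀ ∧ w 0 = w₀ ∧
    (∀ t : ℝ, HasDerivAt x (a * (y t - x t) + w t) t ∧
      HasDerivAt y (d * x t + a * y t) t ∧
      HasDerivAt z 0 t ∧ HasDerivAt w 0 t) ∧
    (∀ t : ℝ, x (t + T) = x t ∧ y (t + T) = y t ∧ z (t + T) = z t ∧ w (t + T) = w t) := by
  have ha : a ≠ 0 := by rintro rfl; simp at had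
  have had' : a + d ≠ 0 := by rintro h; rw [h] at had; simp at had
  have hpos : 0 < -(a * (a + d)) := by linarith
  have hΩpos : 0 < Ω := by rw [hΩ]; exact Real.sqrt_pos.mpr hpos
  have hΩne : Ω ≠ 0 := ne_of_gt hΩpos
  have hΩ2 : Ω * Ω = -(a * (a + d)) := by
    rw [hΩ]; exact Real.mul_self_sqrt hpos.le
  have hΩT : Ω * T = 2 * Real.pi := by
    rw [hT]; field_simp
  have hx' : x = fun t => (1 / (a + d)) * (w₀ + ((a + d) * x₀ - w₀) * Real.cos (Ω * t) -
      (Ω / a) * (w₀ + a * (y₀ - x₀)) * Real.sin (Ω * t)) := funext hx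
  have hy' : y = fun t => (1 / (a * (a + d))) * ((d * w₀ + a * (a + d) * y₀) * Real.cos (Ω * t)
      - d * w₀ - Ω * (d * x₀ + a * y₀) * Real.sin (Ω * t)) := funext hy
  have hz' : z = fun _ => z₀ := funext hz
  have hw' : w = fun _ => w₀ := funext hw
  refine ⟨by rw [hx]; simp only [mul_zero, Real.cos_zero, Real.sin_zero]; field_simp; ring,
    by rw [hy]; simp only [mul_zero, Real.cos_zero, Real.sin_zero]; field_simp; ring,
    hz 0, hw 0, ?_, ?_⟩
  · intro t
    have hid : HasDerivAt (fun t : ℝ => Ω * t) Ω t := by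
      simpa using (hasDerivAt_id t).const_mul Ω
    have hc : HasDerivAt (fun t : ℝ => Real.cos (Ω * t)) (-Real.sin (Ω * t) * Ω) t :=
      (Real.hasDerivAt_cos (Ω * t)).comp t hid
    have hs : HasDerivAt (fun t : ℝ => Real.sin (Ω * t)) (Real.cos (Ω * t) * Ω) t :=
      (Real.hasDerivAt_sin (Ω * t)).comp t hid
    refine ⟨?_, ?_, by rw [hz']; exact hasDerivAt_const t z₀,
      by rw [hw']; exact hasDerivAt_const t w₀⟩
    · rw [hx']
      have h1 : HasDerivAt (fun t : ℝ => (1 / (a + d)) * (w₀ + ((a + d) * x₀ - w₀) * Real.cos (Ω * t) -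
          (Ω / a) * (w₀ + a * (y₀ - x₀)) * Real.sin (Ω * t)))
          ((1 / (a + d)) * (((a + d) * x₀ - w₀) * (-Real.sin (Ω * t) * Ω) -
            (Ω / a) * (w₀ + a * (y₀ - x₀)) * (Real.cos (Ω * t) * Ω))) t := by
        exact (((hc.const_mul _).const_add _).sub ((hs.const_mul _))).const_mul _
      convert h1 using 1
      simp only [hx, hy, hw]
      field_simp
      linear_combination (Real.cos (Ω * t) * (w₀ + a * (y₀ - x₀))) * hΩ2
    · rw [hy']
      have h1 : HasDerivAt (fun t : ℝ => (1 / (a * (a + d))) * ((d * w₀ + a * (a + d) * y₀) * Real.cos (Ω * t)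
          - d * w₀ - Ω * (d * x₀ + a * y₀) * Real.sin (Ω * t)))
          ((1 / (a * (a + d))) * ((d * w₀ + a * (a + d) * y₀) * (-Real.sin (Ω * t) * Ω)
            - Ω * (d * x₀ + a * y₀) * (Real.cos (Ω * t) * Ω))) t := by
        have := (((hc.const_mul (d * w₀ + a * (a + d) * y₀)).sub_const (d * w₀)).sub
          ((hs.const_mul (Ω * (d * x₀ + a * y₀))))).const_mul (1 / (a * (a + d)))
        exact this.congr_deriv (by ring)
      convert h1 using 1
      simp only [hx, hy]
      field_simp
      linear_combination (Real.cos (Ω * t) * (d * x₀ + a * y₀)) * hΩ2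
  · intro t
    have harg : Ω * (t + T) = Ω * t + 2 * Real.pi := by rw [mul_add, hΩT]
    refine ⟨?_, ?_, by rw [hz, hz], by rw [hw, hw]⟩
    · rw [hx, hx, harg, Real.cos_add_two_pi, Real.sin_add_two_pi]
    · rw [hy, hy, harg, Real.cos_add_two_pi, Real.sin_add_two_pi]
end

section
/- Let a, d be real numbers with a(a + d) < 0, set Ω = √(−a(a + d)) and T = 2π/Ω, and let A be the 4×4 real matrix A = [[−a, a, 0, 1], [d, a, 0, 0], [0, 0, 0, 0], [0, 0, 0, 0]]. Then the matrix exponential satisfies exp(T·A) = I. Consequently every solution of the linear system u̇ = A·u in ℝ⁴ is T-periodic. -/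
open scoped Nat

private lemma chen_pow_odd {R : Type*} [Ring R] [Algebra ℝ R] (X : R) (c : ℝ)
    (h3 : X ^ 3 = (-(c ^ 2)) • X) (k : ℕ) :
    X ^ (2 * k + 1) = ((-(c ^ 2)) ^ k) • X := by
  induction k with
  | zero => simp
  | succ n ih =>
    have e : 2 * (n + 1) + 1 = (2 * n + 1) + 2 := by ring
    rw [e, pow_add, ih, smul_mul_assoc, ← pow_succ' X 2, h3, smul_smul, ← pow_succ]

private lemma chen_pow_even {R : Type*} [Ring R] [Algebra ℝ R] (X : R) (c : ℝ)
    (h3 : X ^ 3 = (-(c ^ 2)) • X) (k : ℕ) :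
    X ^ (2 * k + 2) = ((-(c ^ 2)) ^ k) • X ^ 2 := by
  have e : 2 * k + 2 = (2 * k + 1) + 1 := by ring
  rw [e, pow_succ, chen_pow_odd X c h3 k, smul_mul_assoc, ← pow_two]

private lemma chen_exp_of_cube {c : ℝ} (hc : c ≠ 0) (X : Matrix (Fin 4) (Fin 4) ℝ)
    (h3 : X ^ 3 = (-(c ^ 2)) • X) :
    NormedSpace.exp X =
      1 + (Real.sin c / c) • X + ((1 - Real.cos c) / c ^ 2) • X ^ 2 := by
  set F : ℕ → Matrix (Fin 4) (Fin 4) ℝ := fun n => ((n ! : ℝ))⁻¹ • X ^ n with hF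
  have hs : HasSum (fun k : ℕ => (((2 * k + 1)! : ℝ))⁻¹ * (-(c ^ 2)) ^ k)
      (Real.sin c / c) := by
    have h := (Real.hasSum_sin c).div_const c
    have e : (fun n : ℕ => (-1) ^ n * c ^ (2 * n + 1) / ((2 * n + 1)! : ℝ) / c)
        = fun k : ℕ => (((2 * k + 1)! : ℝ))⁻¹ * (-(c ^ 2)) ^ k := by
      funext n
      have h1 : ((2 * n + 1)! : ℝ) ≠ 0 := Nat.cast_ne_zero.2 (Nat.factorial_ne_zero _)
      field_simp
      ring
    rwa [e] at h
  have hg : HasSum (fun k : ℕ => (((2 * k + 2)! : ℝ))⁻¹ * (-(c ^ 2)) ^ k)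
      ((1 - Real.cos c) / c ^ 2) := by
    have h0 : HasSum (fun n : ℕ => (-1) ^ (n + 1) * c ^ (2 * (n + 1)) / ((2 * (n + 1))! : ℝ))
        (Real.cos c - 1) :=
      (hasSum_nat_add_iff (f := fun n : ℕ => (-1) ^ n * c ^ (2 * n) / ((2 * n)! : ℝ)) 1).mpr
        (by simpa using Real.hasSum_cos c)
    have h := (h0.neg).div_const (c ^ 2)
    have e : (fun n : ℕ => -((-1) ^ (n + 1) * c ^ (2 * (n + 1)) / ((2 * (n + 1))! : ℝ)) / c ^ 2)
        = fun k : ℕ => (((2 * k + 2)! : ℝ))⁻¹ * (-(c ^ 2)) ^ k := by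
      funext n
      have e2 : 2 * (n + 1) = 2 * n + 2 := by ring
      have h1 : ((2 * n + 2)! : ℝ) ≠ 0 := Nat.cast_ne_zero.2 (Nat.factorial_ne_zero _)
      rw [e2]
      field_simp
      ring
    rw [e] at h
    simpa [neg_sub] using h
  have hodd : HasSum (fun k : ℕ => F (2 * k + 1)) ((Real.sin c / c) • X) := by
    have h := hs.smul_const (a := X)
    have e : (fun k : ℕ => ((((2 * k + 1)! : ℝ))⁻¹ * (-(c ^ 2)) ^ k) • X)
        = fun k : ℕ => F (2 * k + 1) := by
      funext k
      rw [hF]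
      simp only [chen_pow_odd X c h3 k, smul_smul]
    rwa [e] at h
  have heven : HasSum (fun k : ℕ => F (2 * k + 1 + 1)) (((1 - Real.cos c) / c ^ 2) • X ^ 2) := by
    have h := hg.smul_const (a := X ^ 2)
    have e : (fun k : ℕ => ((((2 * k + 2)! : ℝ))⁻¹ * (-(c ^ 2)) ^ k) • X ^ 2)
        = fun k : ℕ => F (2 * k + 1 + 1) := by
      funext k
      rw [hF]
      have e2 : 2 * k + 1 + 1 = 2 * k + 2 := by ring
      simp only [e2, chen_pow_even X c h3 k, smul_smul]
    rwa [e] at h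
  have hcomb : HasSum (fun n : ℕ => F (n + 1))
      ((Real.sin c / c) • X + ((1 - Real.cos c) / c ^ 2) • X ^ 2) :=
    HasSum.even_add_odd hodd heven
  have hfull : HasSum F
      (F 0 + ((Real.sin c / c) • X + ((1 - Real.cos c) / c ^ 2) • X ^ 2)) :=
    hcomb.zero_add
  have hF0 : F 0 = 1 := by simp [hF]
  rw [NormedSpace.exp_eq_tsum (𝕂 := ℝ)]
  show (∑' n : ℕ, ((n ! : ℝ))⁻¹ • X ^ n) = _
  rw [show (∑' n : ℕ, ((n ! : ℝ))⁻¹ • X ^ n) = tsum F from rfl, hfull.tsum_eq, hF0]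
  abel

private lemma chen_hasDerivAt_mulVec {M : Matrix (Fin 4) (Fin 4) ℝ} {v : ℝ → Fin 4 → ℝ}
    {v' : Fin 4 → ℝ} {t : ℝ} (hv : HasDerivAt v v' t) :
    HasDerivAt (fun τ => M.mulVec (v τ)) (M.mulVec v') t := by
  rw [hasDerivAt_pi] at hv ⊢
  intro i
  simpa [Matrix.mulVec, dotProduct] using
    HasDerivAt.fun_sum (fun j (_ : j ∈ Finset.univ) => ((hv j).const_mul (M i j)))

theorem chen_unperturbed_monodromy (a d : ℝ) (had : a * (a + d) < 0)
    (Ω : ℝ) (hΩ : Ω = Real.sqrt (-(a * (a + d))))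
    (T : ℝ) (hT : T = 2 * Real.pi / Ω)
    (A : Matrix (Fin 4) (Fin 4) ℝ)
    (hA : A = !![-a, a, 0, 1; d, a, 0, 0; 0, 0, 0, 0; 0, 0, 0, 0]) :
    NormedSpace.exp (T • A) = 1 ∧
    ∀ u : ℝ → (Fin 4 → ℝ), (∀ t, HasDerivAt u (A.mulVec (u t)) t) →
      ∀ t, u (t + T) = u t := by
  have hpos : (0 : ℝ) < -(a * (a + d)) := by linarith
  have hΩpos : 0 < Ω := by rw [hΩ]; exact Real.sqrt_pos.2 hpos
  have hΩne : Ω ≠ 0 := ne_of_gt hΩpos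
  have hΩ2 : Ω ^ 2 = -(a * (a + d)) := by rw [hΩ]; exact Real.sq_sqrt hpos.le
  have hTΩ : T * Ω = 2 * Real.pi := by
    rw [hT]; field_simp
  have hA3 : A ^ 3 = (-(Ω ^ 2)) • A := by
    rw [hA]
    have h2 : (!![-a, a, 0, 1; d, a, 0, 0; 0, 0, 0, 0; 0, 0, 0, 0] : Matrix (Fin 4) (Fin 4) ℝ)
        * !![-a, a, 0, 1; d, a, 0, 0; 0, 0, 0, 0; 0, 0, 0, 0]
        = !![a*a + a*d, -a*a + a*a, 0, -a; -a*d + a*d, a*d + a*a, 0, d; 0,0,0,0; 0,0,0,0] := by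
      ext i j
      fin_cases i <;> fin_cases j <;>
        simp [Matrix.mul_apply, Fin.sum_univ_four, Matrix.vecHead, Matrix.vecTail,
          Function.comp] <;> (first | ring1 | (left; ring1) | tauto)
    rw [pow_succ, pow_succ, pow_one, h2]
    ext i j
    fin_cases i <;> fin_cases j <;>
      simp [Matrix.mul_apply, Fin.sum_univ_four, Matrix.vecHead, Matrix.vecTail,
        Function.comp, hΩ2] <;> (first | ring1 | (left; ring1) | tauto)
  -- Part 1
  have hX3 : (T • A) ^ 3 = (-((2 * Real.pi) ^ 2)) • (T • A) := by
    rw [smul_pow, hA3, smul_smul, smul_smul]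
    congr 1
    rw [show T ^ 3 * -(Ω ^ 2) = -((T * Ω) ^ 2) * T by ring, hTΩ]
  have hπ : (2 * Real.pi : ℝ) ≠ 0 := by positivity
  have hexp : NormedSpace.exp (T • A) = 1 := by
    rw [chen_exp_of_cube hπ (T • A) hX3, Real.sin_two_pi, Real.cos_two_pi]
    simp
  refine ⟨hexp, ?_⟩
  -- Part 2
  intro u hu t
  have hAA3 : A * A * A = (-(Ω ^ 2)) • A := by
    rw [← hA3, pow_succ, pow_succ, pow_one]
  set t₀ := t + T with ht₀
  set w : ℝ → Fin 4 → ℝ := fun τ =>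
    u τ + (Real.sin (Ω * (t₀ - τ)) / Ω) • A.mulVec (u τ)
      + ((1 - Real.cos (Ω * (t₀ - τ))) / Ω ^ 2) • (A * A).mulVec (u τ) with hw
  have hwderiv : ∀ τ, HasDerivAt w 0 τ := by
    intro τ
    have hu' := hu τ
    have h2 : HasDerivAt (fun τ => A.mulVec (u τ)) ((A * A).mulVec (u τ)) τ := by
      have h := chen_hasDerivAt_mulVec (M := A) hu'
      rwa [Matrix.mulVec_mulVec] at h
    have h3 : HasDerivAt (fun τ => (A * A).mulVec (u τ)) ((-(Ω ^ 2)) • A.mulVec (u τ)) τ := by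
      have h := chen_hasDerivAt_mulVec (M := A * A) hu'
      rwa [Matrix.mulVec_mulVec, hAA3, Matrix.smul_mulVec] at h
    have hinner : HasDerivAt (fun τ : ℝ => Ω * (t₀ - τ)) (Ω * -1) τ :=
      ((hasDerivAt_id τ).const_sub t₀).const_mul Ω
    have hsin : HasDerivAt (fun τ => Real.sin (Ω * (t₀ - τ)) / Ω)
        (-Real.cos (Ω * (t₀ - τ))) τ := by
      have h := ((Real.hasDerivAt_sin (Ω * (t₀ - τ))).comp τ hinner).div_const Ω
      have e : Real.cos (Ω * (t₀ - τ)) * (Ω * -1) / Ω = -Real.cos (Ω * (t₀ - τ)) := by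
        field_simp
      rwa [e] at h
    have hcos : HasDerivAt (fun τ => (1 - Real.cos (Ω * (t₀ - τ))) / Ω ^ 2)
        (-(Real.sin (Ω * (t₀ - τ)) / Ω)) τ := by
      have h := (((Real.hasDerivAt_cos (Ω * (t₀ - τ))).comp τ hinner).const_sub 1).div_const
        (Ω ^ 2)
      have e : -(-Real.sin (Ω * (t₀ - τ)) * (Ω * -1)) / Ω ^ 2
          = -(Real.sin (Ω * (t₀ - τ)) / Ω) := by
        field_simp
      rwa [e] at h
    have hcomb := (hu'.add (hsin.smul h2)).add (hcos.smul h3)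
    have hzero : A.mulVec (u τ)
        + ((Real.sin (Ω * (t₀ - τ)) / Ω) • (A * A).mulVec (u τ)
            + (-Real.cos (Ω * (t₀ - τ))) • A.mulVec (u τ))
        + (((1 - Real.cos (Ω * (t₀ - τ))) / Ω ^ 2) • ((-(Ω ^ 2)) • A.mulVec (u τ))
            + (-(Real.sin (Ω * (t₀ - τ)) / Ω)) • (A * A).mulVec (u τ)) = 0 := by
      have hc : Real.cos (Ω * (t₀ - τ)) = Real.cos (Ω * (t₀ - τ)) := rfl
      match_scalars <;> field_simp <;> ring
    rw [hw]
    exact hzero ▸ hcomb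
  have hwconst : w t₀ = w t := by
    have hdiff : Differentiable ℝ w := fun x => (hwderiv x).differentiableAt
    exact is_const_of_deriv_eq_zero hdiff (fun x => (hwderiv x).deriv) t₀ t
  have hwt₀ : w t₀ = u t₀ := by
    rw [hw]
    simp
  have hwt : w t = u t := by
    have e : Ω * (t₀ - t) = 2 * Real.pi := by
      rw [ht₀, show t + T - t = T by ring, mul_comm]; exact hTΩ
    rw [hw]
    simp only [e, Real.sin_two_pi, Real.cos_two_pi]
    simp
  rw [← hwt₀, hwconst, hwt]
end

section
/- Let a, b, d, r be real numbers with a(a + d) < 0 and b(a + d)r > 0 (so that d ≠ 0 and b(a + d)r has a real square root s = √(b(a + d)r) > 0). Define p₁ = (as/d, −s, a(a + d)r/d, a(a + d)s/d) and p₂ = (−as/d, s, a(a + d)r/d, −a(a + d)s/d) in ℝ⁴. Then f(p₁) = 0, f(p₂) = 0, and p₁ ≠ p₂, where f = (f₁, f₂, f₃, f₄) is the explicit averaged function. -/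
set_option maxHeartbeats 2000000


/-- The first-order averaged function of the hyperchaotic Chen system,
`u = (x₀, y₀, z₀, w₀)`. -/
noncomputable def chenAvg (a b d r : ℝ) (u : Fin 4 → ℝ) : Fin 4 → ℝ :=
  ![r * u 3 / (a + d) + d * u 2 * ((a + d) * u 0 - 3 * u 3) / (2 * a * (a + d) ^ 2)
      - (a * (u 1 - u 0) + u 3) * u 2 / (2 * (a + d)),
    d * (3 * d * u 3 + a * (a + d) * u 1) * u 2 / (2 * a ^ 2 * (a + d) ^ 2)
      - d * r * u 3 / (a * (a + d)) - (d * u 0 + a * u 1) * u 2 / (2 * (a + d)),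
    d ^ 2 * (u 0 ^ 2 + 2 * b * u 2) / (2 * (a + d) ^ 2)
      + a * (2 * a * b * u 2 - u 1 * (2 * u 3 + a * (u 1 - 2 * u 0))) / (2 * (a + d) ^ 2)
      - d * (3 * u 3 ^ 2 + 2 * a * u 3 * u 1) / (2 * a * (a + d) ^ 2)
      + a * d * (u 0 ^ 2 + 2 * u 0 * u 1 - u 1 ^ 2 + 4 * b * u 2) / (2 * (a + d) ^ 2),
    u 3 * (r - d * u 2 / (a * (a + d)))]

theorem chen_averaged_zeros (a b d r : ℝ)
    (hneg : a * (a + d) < 0) (hpos : 0 < b * (a + d) * r)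
    (s : ℝ) (hs : s = Real.sqrt (b * (a + d) * r))
    (p₁ p₂ : Fin 4 → ℝ)
    (hp₁ : p₁ = ![a * s / d, -s, a * (a + d) * r / d, a * (a + d) * s / d])
    (hp₂ : p₂ = ![-(a * s / d), s, a * (a + d) * r / d, -(a * (a + d) * s / d)]) :
    d ≠ 0 ∧ 0 < s ∧
    chenAvg a b d r p₁ = 0 ∧ chenAvg a b d r p₂ = 0 ∧ p₁ ≠ p₂ := by
  have ha : a ≠ 0 := by rintro rfl; simp at hneg
  have had : a + d ≠ 0 := by rintro h; rw [h] at hneg; simp at hneg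
  have hd : d ≠ 0 := by
    rintro rfl
    rw [add_zero, ← sq] at hneg
    exact absurd hneg (not_lt.2 (sq_nonneg a))
  have hspos : 0 < s := hs ▸ Real.sqrt_pos.2 hpos
  have hs2 : s ^ 2 = b * (a + d) * r := by
    rw [hs, Real.sq_sqrt hpos.le]
  have hb : b ≠ 0 := by rintro rfl; simp at hpos
  have hr : r = s ^ 2 / (b * (a + d)) := by
    rw [hs2]; field_simp
  refine ⟨hd, hspos, ?_, ?_, ?_⟩
  · subst hp₁
    funext i
    fin_cases i <;>
      simp only [chenAvg, Matrix.cons_val_zero, Matrix.cons_val_one, Matrix.head_cons,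
        Matrix.cons_val_two, Matrix.tail_cons, Matrix.cons_val_three, Pi.zero_apply,
        Matrix.cons_val_fin_one] <;>
      rw [hr] <;> field_simp <;> ring <;> rfl
  · subst hp₂
    funext i
    fin_cases i <;>
      simp only [chenAvg, Matrix.cons_val_zero, Matrix.cons_val_one, Matrix.head_cons,
        Matrix.cons_val_two, Matrix.tail_cons, Matrix.cons_val_three, Pi.zero_apply,
        Matrix.cons_val_fin_one] <;>
      rw [hr] <;> field_simp <;> ring <;> rfl
  · intro h
    have h1 : p₁ 1 = p₂ 1 := by rw [h]
    rw [hp₁, hp₂] at h1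
    simp at h1
    linarith
end

section
/- Let a, b, d, r be real numbers with a(a + d) < 0 and b(a + d)r > 0, set s = √(b(a + d)r), and let p₁ = (as/d, −s, a(a + d)r/d, a(a + d)s/d) and p₂ = (−as/d, s, a(a + d)r/d, −a(a + d)s/d). Then the determinant of the Jacobian matrix of the averaged function f at each of the points p₁ and p₂ equals b(a⁴ + a³d − d²)r³/(2d²). -/
/-- The Jacobian matrix of a map `ℝ⁴ → ℝ⁴` at a point. -/
noncomputable def jacobian (f : (Fin 4 → ℝ) → (Fin 4 → ℝ)) (p : Fin 4 → ℝ) :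
    Matrix (Fin 4) (Fin 4) ℝ :=
  Matrix.of fun i j => fderiv ℝ f p (Pi.single j 1) i

noncomputable abbrev prj (k : Fin 4) : (Fin 4 → ℝ) →L[ℝ] ℝ := ContinuousLinearMap.proj k

lemma quad_hasFDerivAt (A : Fin 4 → Fin 4 → Fin 4 → ℝ) (B : Fin 4 → Fin 4 → ℝ)
    (p : Fin 4 → ℝ) :
    HasFDerivAt (fun u : Fin 4 → ℝ => fun i =>
        (∑ j, ∑ k, A i j k * (u j * u k)) + ∑ j, B i j * u j)
      (ContinuousLinearMap.pi fun i =>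
        (∑ j, ∑ k, A i j k • (p j • prj k + p k • prj j)) + ∑ j, B i j • prj j) p := by
  refine hasFDerivAt_pi.2 fun i => ?_
  exact (HasFDerivAt.fun_sum fun j _ => HasFDerivAt.fun_sum fun k _ =>
      ((hasFDerivAt_apply j p).mul (hasFDerivAt_apply k p)).const_mul _).add
    (HasFDerivAt.fun_sum fun j _ => (hasFDerivAt_apply j p).const_mul _)

lemma quad_jacobian_apply (A : Fin 4 → Fin 4 → Fin 4 → ℝ) (B : Fin 4 → Fin 4 → ℝ)
    (f : (Fin 4 → ℝ) → Fin 4 → ℝ)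
    (hf : ∀ u i, f u i = (∑ j, ∑ k, A i j k * (u j * u k)) + ∑ j, B i j * u j)
    (p : Fin 4 → ℝ) (i j : Fin 4) :
    jacobian f p i j = (∑ k, A i j k * p k) + (∑ k, A i k j * p k) + B i j := by
  have hff : f = fun u i => (∑ j, ∑ k, A i j k * (u j * u k)) + ∑ j, B i j * u j :=
    funext fun u => funext (hf u)
  rw [jacobian, Matrix.of_apply, hff, (quad_hasFDerivAt A B p).fderiv]
  simp only [ContinuousLinearMap.pi_apply, ContinuousLinearMap.add_apply,
    ContinuousLinearMap.sum_apply, ContinuousLinearMap.smul_apply,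
    ContinuousLinearMap.proj_apply, smul_eq_mul, prj]
  fin_cases j <;> simp [Fin.sum_univ_four, Pi.single_apply] <;> ring
lemma det_fin_four' (M : Matrix (Fin 4) (Fin 4) ℝ) :
    M.det =
      M 0 0*(M 1 1*(M 2 2*M 3 3 - M 2 3*M 3 2) - M 1 2*(M 2 1*M 3 3 - M 2 3*M 3 1)
          + M 1 3*(M 2 1*M 3 2 - M 2 2*M 3 1))
    - M 0 1*(M 1 0*(M 2 2*M 3 3 - M 2 3*M 3 2) - M 1 2*(M 2 0*M 3 3 - M 2 3*M 3 0)
          + M 1 3*(M 2 0*M 3 2 - M 2 2*M 3 0))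
    + M 0 2*(M 1 0*(M 2 1*M 3 3 - M 2 3*M 3 1) - M 1 1*(M 2 0*M 3 3 - M 2 3*M 3 0)
          + M 1 3*(M 2 0*M 3 1 - M 2 1*M 3 0))
    - M 0 3*(M 1 0*(M 2 1*M 3 2 - M 2 2*M 3 1) - M 1 1*(M 2 0*M 3 2 - M 2 2*M 3 0)
          + M 1 2*(M 2 0*M 3 1 - M 2 1*M 3 0)) := by
  rw [Matrix.det_succ_row_zero]
  simp [Fin.sum_univ_succ, Matrix.det_fin_three, Matrix.submatrix_apply, Fin.succAbove, show ((2:Fin 3).succ = 3) from rfl]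
  ring
noncomputable def chenA (a d : ℝ) : Fin 4 → Fin 4 → Fin 4 → ℝ :=
  ![![![0,0, d/(2*a*(a+d)) + a/(2*(a+d)), 0], ![0,0, -(a/(2*(a+d))), 0],
     ![0,0,0, -(3*d/(2*a*(a+d)^2)) - 1/(2*(a+d))], ![0,0,0,0]],
    ![![0,0, -(d/(2*(a+d))), 0], ![0,0, d/(2*a*(a+d)) - a/(2*(a+d)), 0],
     ![0,0,0, 3*d^2/(2*a^2*(a+d)^2)], ![0,0,0,0]],
    ![![d/(2*(a+d)), a/(a+d), 0, 0], ![0, -(a/(2*(a+d))), 0, -(1/(a+d))],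
     ![0,0,0,0], ![0,0,0, -(3*d/(2*a*(a+d)^2))]],
    ![![0,0,0,0], ![0,0,0,0], ![0,0,0, -(d/(a*(a+d)))], ![0,0,0,0]]]

noncomputable def chenB (a b d r : ℝ) : Fin 4 → Fin 4 → ℝ :=
  ![![0,0,0, r/(a+d)], ![0,0,0, -(d*r/(a*(a+d)))], ![0,0,b,0], ![0,0,0,r]]

set_option maxHeartbeats 1000000 in
lemma chen_hf (a b d r : ℝ) (ha : a ≠ 0) (hc : a + d ≠ 0) : ∀ (u : Fin 4 → ℝ) (i : Fin 4),
    chenAvg a b d r u i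
      = (∑ j, ∑ k, chenA a d i j k * (u j * u k)) + ∑ j, chenB a b d r i j * u j := by
  intro u i
  fin_cases i <;>
    simp only [chenAvg, chenA, chenB, Fin.sum_univ_four, Matrix.cons_val_zero,
      Matrix.cons_val_one, Matrix.head_cons, Matrix.cons_val_two, Matrix.tail_cons,
      Matrix.cons_val_three, Fin.reduceFinMk, Fin.zero_eta, Fin.isValue] <;>
    field_simp <;> ring
set_option maxHeartbeats 4000000 in
lemma chenAux (a b d s : ℝ) (ha : a ≠ 0) (hd : d ≠ 0) (hc : a + d ≠ 0) (hb : b ≠ 0) :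
    (jacobian (chenAvg a b d (s^2/(b*(a+d))))
        ![a*s/d, -s, a*(a+d)*(s^2/(b*(a+d)))/d, a*(a+d)*s/d]).det
      = b*(a^4+a^3*d-d^2)*(s^2/(b*(a+d)))^3/(2*d^2) := by
  set r := s^2/(b*(a+d)) with hr
  have key := quad_jacobian_apply (chenA a d) (chenB a b d r) _
    (chen_hf a b d r ha hc) ![a*s/d, -s, a*(a+d)*r/d, a*(a+d)*s/d]
  rw [det_fin_four']
  simp only [key, chenA, chenB, Fin.sum_univ_four, Matrix.cons_val_zero,
    Matrix.cons_val_one, Matrix.head_cons, Matrix.cons_val_two, Matrix.tail_cons,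
    Matrix.cons_val_three, Fin.isValue]
  rw [hr]
  field_simp
  ring

theorem chen_averaged_jacobian_det (a b d r : ℝ)
    (hneg : a * (a + d) < 0) (hpos : 0 < b * (a + d) * r)
    (s : ℝ) (hs : s = Real.sqrt (b * (a + d) * r))
    (p₁ p₂ : Fin 4 → ℝ)
    (hp₁ : p₁ = ![a * s / d, -s, a * (a + d) * r / d, a * (a + d) * s / d])
    (hp₂ : p₂ = ![-(a * s / d), s, a * (a + d) * r / d, -(a * (a + d) * s / d)]) :
    (jacobian (chenAvg a b d r) p₁).det = b * (a ^ 4 + a ^ 3 * d - d ^ 2) * r ^ 3 / (2 * d ^ 2) ∧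
    (jacobian (chenAvg a b d r) p₂).det = b * (a ^ 4 + a ^ 3 * d - d ^ 2) * r ^ 3 / (2 * d ^ 2) := by
  have ha : a ≠ 0 := by rintro rfl; simp at hneg
  have hc : a + d ≠ 0 := by intro h; rw [h, mul_zero] at hneg; exact lt_irrefl 0 hneg
  have hd : d ≠ 0 := by rintro rfl; rw [add_zero] at hneg; nlinarith
  have hb : b ≠ 0 := by rintro rfl; simp at hpos
  have hs2 : s ^ 2 = b * (a + d) * r := by rw [hs]; exact Real.sq_sqrt hpos.le
  have hr : r = s ^ 2 / (b * (a + d)) := by rw [hs2]; field_simp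
  constructor
  · rw [hp₁, hr]; exact chenAux a b d s ha hd hc hb
  · rw [hp₂, hr]
    simpa [neg_sq, mul_neg, neg_div] using chenAux a b d (-s) ha hd hc hb
end

section
/- Let a, b, d, r be real numbers with a(a + d) < 0 and b(a + d)r > 0, set s = √(b(a + d)r), and let p₁ = (as/d, −s, a(a + d)r/d, a(a + d)s/d) and p₂ = (−as/d, s, a(a + d)r/d, −a(a + d)s/d). Then p₁ and p₂ are isolated zeros of the averaged function f: for each i ∈ {1, 2} there is a neighborhood U of pᵢ in ℝ⁴ such that pᵢ is the only zero of f in U. -/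
set_option maxHeartbeats 2000000

lemma chenAvg_apply (a b d r x y z w : ℝ) :
    chenAvg a b d r ![x, y, z, w] =
    ![r * w / (a + d) + d * z * ((a + d) * x - 3 * w) / (2 * a * (a + d) ^ 2)
        - (a * (y - x) + w) * z / (2 * (a + d)),
      d * (3 * d * w + a * (a + d) * y) * z / (2 * a ^ 2 * (a + d) ^ 2)
        - d * r * w / (a * (a + d)) - (d * x + a * y) * z / (2 * (a + d)),
      d ^ 2 * (x ^ 2 + 2 * b * z) / (2 * (a + d) ^ 2)
        + a * (2 * a * b * z - y * (2 * w + a * (y - 2 * x))) / (2 * (a + d) ^ 2)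
        - d * (3 * w ^ 2 + 2 * a * w * y) / (2 * a * (a + d) ^ 2)
        + a * d * (x ^ 2 + 2 * x * y - y ^ 2 + 4 * b * z) / (2 * (a + d) ^ 2),
      w * (r - d * z / (a * (a + d)))] := by
  unfold chenAvg
  rfl

lemma chenAux_s11 (a b d r : ℝ)
    (hneg : a * (a + d) < 0) (hpos : 0 < b * (a + d) * r)
    (s : ℝ) (hs : s = Real.sqrt (b * (a + d) * r))
    (ε : ℝ) (hε : ε = 1 ∨ ε = -1)
    (p : Fin 4 → ℝ)
    (hp : p = ![ε * (a * s) / d, -(ε * s), a * (a + d) * r / d, ε * (a * (a + d) * s) / d]) :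
    chenAvg a b d r p = 0 ∧ ∃ U ∈ nhds p, ∀ u ∈ U, chenAvg a b d r u = 0 → u = p := by
  have ha : a ≠ 0 := by rintro rfl; simp at hneg
  have hA : a + d ≠ 0 := by intro h; rw [h] at hneg; simp at hneg
  have hd : d ≠ 0 := by rintro rfl; nlinarith [sq_nonneg a]
  have hr : r ≠ 0 := by rintro rfl; simp at hpos
  have hspos : 0 < s := by rw [hs]; exact Real.sqrt_pos.mpr hpos
  have hsne : s ≠ 0 := ne_of_gt hspos
  have hs2 : s ^ 2 = b * (a + d) * r := by rw [hs]; exact Real.sq_sqrt hpos.le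
  have hb : b = s ^ 2 / ((a + d) * r) := by field_simp; linear_combination -hs2
  subst hb
  subst hp
  have hDet : 0 < d ^ 2 - a ^ 3 * (a + d) := by
    have h1 : a ^ 2 * (a * (a + d)) < 0 := mul_neg_of_pos_of_neg (by positivity) hneg
    have h2 : (0:ℝ) < d ^ 2 := by positivity
    nlinarith
  constructor
  · rcases hε with rfl | rfl <;>
    · rw [chenAvg_apply]
      simp only [Matrix.cons_eq_zero_iff, Matrix.zero_empty, and_true]
      refine ⟨by field_simp; try ring, by field_simp; try ring, by field_simp; try ring,
        by field_simp; try ring⟩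
  · set W : ℝ := ε * (a * (a + d) * s) / d with hW
    have hWne : W ≠ 0 := by
      rcases hε with rfl | rfl <;> simp only [hW] <;> field_simp <;> simp [ha, hA, hd, hsne]
    refine ⟨{u | 0 < W * u 3}, ?_, ?_⟩
    · refine IsOpen.mem_nhds (isOpen_lt continuous_const ?_) ?_
      · exact continuous_const.mul (continuous_apply 3)
      · show 0 < W * W
        exact mul_self_pos.mpr hWne
    · intro u hu h
      have hu3 : u 3 ≠ 0 := by
        intro h3; rw [Set.mem_setOf_eq, h3, mul_zero] at hu; exact lt_irrefl 0 hu
      have h0 := congrFun h 0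
      have h1 := congrFun h 1
      have h2 := congrFun h 2
      have h3 := congrFun h 3
      simp only [chenAvg, Matrix.cons_val_zero, Matrix.cons_val_one, Matrix.head_cons,
        Matrix.cons_val_two, Matrix.tail_cons, Matrix.cons_val_three, Pi.zero_apply] at h0 h1 h2 h3
      have hz : u 2 = a * (a + d) * r / d := by
        rcases mul_eq_zero.mp h3 with h' | h'
        · exact absurd h' hu3
        · field_simp at h' ⊢; linarith [h']
      rw [hz] at h0 h1 h2
      field_simp at h0 h1
      have keyx : (2*a^3*(a+d)^4*d*r*(d^2 - a^3*(a+d))) * ((a+d) * u 0 - u 3) = 0 := by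
        linear_combination (2*a^3*(a+d)^4*d*(d-a^2)) * h0 + (2*a^3*(a+d)^4*d*a) * h1
      have keyy : (2*a^2*(a+d)^4*d*r*(d^2 - a^3*(a+d))) * (a*(a+d) * u 1 + d * u 3) = 0 := by
        linear_combination (2*a^2*(a+d)^4*d*(a^2*d)) * h0 + (2*a^2*(a+d)^4*d*(d+a^2)) * h1
      have hcne : (2*a^3*(a+d)^4*d*r*(d^2 - a^3*(a+d))) ≠ 0 :=
        mul_ne_zero (by simp [ha, hA, hd, hr]) (ne_of_gt hDet)
      have hcne' : (2*a^2*(a+d)^4*d*r*(d^2 - a^3*(a+d))) ≠ 0 :=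
        mul_ne_zero (by simp [ha, hA, hd, hr]) (ne_of_gt hDet)
      have hx : u 0 = u 3 / (a + d) := by
        have := (mul_eq_zero.mp keyx).resolve_left hcne
        field_simp
        linarith [this]
      have hy : u 1 = -(d * u 3) / (a * (a + d)) := by
        have := (mul_eq_zero.mp keyy).resolve_left hcne'
        field_simp
        linarith [this]
      rw [hx, hy] at h2
      field_simp at h2
      have key2' : (16*a^6*(a+d)^21*d^2*r^3) *
          ((d * u 3 - a * (a + d) * s) * (d * u 3 + a * (a + d) * s)) = 0 := by
        linear_combination (-8*a^6*(a+d)^19*d^2*r^3) * h2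
      have hC : (16*a^6*(a+d)^21*d^2*r^3 : ℝ) ≠ 0 := by
        simp [ha, hA, hd, hr]
      have key2 := (mul_eq_zero.mp key2').resolve_left hC
      rw [Set.mem_setOf_eq] at hu
      have hu3W : u 3 = W := by
        rcases mul_eq_zero.mp key2 with hc | hc
        · have h3v : u 3 = a * (a + d) * s / d := by field_simp; linarith [hc]
          rcases hε with rfl | rfl
          · rw [hW, h3v]; ring
          · exfalso
            rw [h3v, hW] at hu
            have heq : -1 * (a * (a + d) * s) / d * (a * (a + d) * s / d)
                = -((a * (a + d) * s / d) ^ 2) := by ring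
            rw [heq] at hu
            nlinarith [sq_nonneg (a * (a + d) * s / d)]
        · have h3v : u 3 = -(a * (a + d) * s) / d := by field_simp; linarith [hc]
          rcases hε with rfl | rfl
          · exfalso
            rw [h3v, hW] at hu
            have heq : 1 * (a * (a + d) * s) / d * (-(a * (a + d) * s) / d)
                = -((a * (a + d) * s / d) ^ 2) := by ring
            rw [heq] at hu
            nlinarith [sq_nonneg (a * (a + d) * s / d)]
          · rw [hW, h3v]; ring
      have e0 : u 0 = ε * (a * s) / d := by rw [hx, hu3W, hW]; field_simp
      have e1 : u 1 = -(ε * s) := by rw [hy, hu3W, hW]; field_simp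
      funext i
      fin_cases i <;>
        simp only [Matrix.cons_val_zero, Matrix.cons_val_one, Matrix.head_cons, Fin.isValue,
          Matrix.cons_val_two, Matrix.tail_cons, Matrix.cons_val_three, Matrix.cons_val',
          Matrix.empty_val', Matrix.cons_val_fin_one]
      · exact e0
      · exact e1
      · exact hz
      · exact hu3W


theorem chen_averaged_isolated_zeros (a b d r : ℝ)
    (hneg : a * (a + d) < 0) (hpos : 0 < b * (a + d) * r)
    (s : ℝ) (hs : s = Real.sqrt (b * (a + d) * r))
    (p₁ p₂ : Fin 4 → ℝ)
    (hp₁ : p₁ = ![a * s / d, -s, a * (a + d) * r / d, a * (a + d) * s / d])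
    (hp₂ : p₂ = ![-(a * s / d), s, a * (a + d) * r / d, -(a * (a + d) * s / d)]) :
    chenAvg a b d r p₁ = 0 ∧ chenAvg a b d r p₂ = 0 ∧
    (∃ U ∈ nhds p₁, ∀ u ∈ U, chenAvg a b d r u = 0 → u = p₁) ∧
    (∃ U ∈ nhds p₂, ∀ u ∈ U, chenAvg a b d r u = 0 → u = p₂) := by
  have h1 := chenAux_s11 a b d r hneg hpos s hs 1 (Or.inl rfl) p₁ (by
    rw [hp₁]; funext i; fin_cases i <;> norm_num)
  have h2 := chenAux_s11 a b d r hneg hpos s hs (-1) (Or.inr rfl) p₂ (by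
    rw [hp₂]; funext i; fin_cases i <;> norm_num <;> ring)
  exact ⟨h1.1, h2.1, h1.2, h2.2⟩
end

section
/- Let a, b, d, r be real numbers with a(a + d) < 0 and b(a + d)r > 0, set Ω = √(−a(a + d)) and s = √(b(a + d)r), and let p₁ = (as/d, −s, a(a + d)r/d, a(a + d)s/d) and p₂ = (−as/d, s, a(a + d)r/d, −a(a + d)s/d). Then for each i ∈ {1, 2}, the characteristic polynomial of the Jacobian matrix Df(pᵢ) of the averaged function f at pᵢ factors as (λ² − bλ − 2br)·(λ² − rλ + (r²/4)(1 + a²Ω²/d²)); equivalently, the complex eigenvalues of Df(pᵢ) are (b ± √(b(b + 8r)))/2 (with the complex square root of b(b + 8r)) and (r/2)(1 ± i aΩ/d). -/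
lemma det_fin_four {R : Type*} [CommRing R] (A : Matrix (Fin 4) (Fin 4) R) :
    A.det = A 0 0*A 1 1*A 2 2*A 3 3 - A 0 0*A 1 1*A 2 3*A 3 2 - A 0 0*A 1 2*A 2 1*A 3 3 + A 0 0*A 1 2*A 2 3*A 3 1 + A 0 0*A 1 3*A 2 1*A 3 2 - A 0 0*A 1 3*A 2 2*A 3 1 - A 0 1*A 1 0*A 2 2*A 3 3 + A 0 1*A 1 0*A 2 3*A 3 2 + A 0 1*A 1 2*A 2 0*A 3 3 - A 0 1*A 1 2*A 2 3*A 3 0 - A 0 1*A 1 3*A 2 0*A 3 2 + A 0 1*A 1 3*A 2 2*A 3 0 + A 0 2*A 1 0*A 2 1*A 3 3 - A 0 2*A 1 0*A 2 3*A 3 1 - A 0 2*A 1 1*A 2 0*A 3 3 + A 0 2*A 1 1*A 2 3*A 3 0 + A 0 2*A 1 3*A 2 0*A 3 1 - A 0 2*A 1 3*A 2 1*A 3 0 - A 0 3*A 1 0*A 2 1*A 3 2 + A 0 3*A 1 0*A 2 2*A 3 1 + A 0 3*A 1 1*A 2 0*A 3 2 - A 0 3*A 1 1*A 2 2*A 3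 0 - A 0 3*A 1 2*A 2 0*A 3 1 + A 0 3*A 1 2*A 2 1*A 3 0 := by
  rw [Matrix.det_succ_row_zero, Fin.sum_univ_four]
  simp only [Matrix.det_fin_three, Matrix.submatrix_apply]
  norm_num [Fin.succAbove, Fin.lt_def, show (Fin.succ 2 : Fin 4) = 3 by decide,
    show (((3:Fin 4)):ℕ) = 3 by decide,
    show ((2:Fin 3).castSucc : Fin 4) = 2 by decide, show ((1:Fin 3).castSucc : Fin 4) = 1 by decide,
    show ((0:Fin 3).castSucc : Fin 4) = 0 by decide, show ((1:Fin 2).castSucc : Fin 3) = 1 by decide,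
    show ((0:Fin 2).castSucc : Fin 3) = 0 by decide, Fin.succ_zero_eq_one, Fin.succ_one_eq_two]
  ring

lemma fderiv_single_eq (g : (Fin 4 → ℝ) → ℝ) (p : Fin 4 → ℝ)
    (hg : DifferentiableAt ℝ g p) (j : Fin 4) (B C : ℝ)
    (h : ∀ t : ℝ, g (p + t • (Pi.single j (1:ℝ) : Fin 4 → ℝ)) = g p + B * t + C * t ^ 2) :
    fderiv ℝ g p ((Pi.single j (1:ℝ) : Fin 4 → ℝ)) = B := by
  have hc : HasDerivAt (fun t : ℝ => p + t • (Pi.single j (1:ℝ) : Fin 4 → ℝ))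
      ((Pi.single j (1:ℝ) : Fin 4 → ℝ)) 0 := by
    simpa using ((hasDerivAt_id (0:ℝ)).smul_const (Pi.single j (1:ℝ))).const_add p
  have h1 : HasDerivAt (fun t : ℝ => g (p + t • (Pi.single j (1:ℝ) : Fin 4 → ℝ)))
      (fderiv ℝ g p ((Pi.single j (1:ℝ) : Fin 4 → ℝ))) 0 := by
    have := hg.hasFDerivAt.comp_hasDerivAt_of_eq hc (by simp) (x := 0)
    exact this
  have h2 : HasDerivAt (fun t : ℝ => g p + B * t + C * t ^ 2) B 0 := by
    have := ((hasDerivAt_const (0:ℝ) (g p)).add ((hasDerivAt_id (0:ℝ)).const_mul B)).add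
      (((hasDerivAt_pow 2 (0:ℝ))).const_mul C)
    simpa [Pi.add_def] using this
  have h3 : HasDerivAt (fun t : ℝ => g (p + t • (Pi.single j (1:ℝ) : Fin 4 → ℝ))) B 0 := by
    simpa only [← h] using h2
  exact h1.unique h3

set_option maxHeartbeats 1000000 in
set_option maxHeartbeats 1000000 in
lemma jac_eq (a b d r : ℝ) (ha : a ≠ 0) (hK : a + d ≠ 0) (p : Fin 4 → ℝ) :
    jacobian (chenAvg a b d r) p = Matrix.of
  ![![d * p 2 / (2*a*(a+d)) + a * p 2 / (2*(a+d)), -(a * p 2 / (2*(a+d))),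
      d*((a+d)*p 0 - 3*p 3)/(2*a*(a+d)^2) - (a*(p 1 - p 0) + p 3)/(2*(a+d)),
      r/(a+d) - 3*d*p 2/(2*a*(a+d)^2) - p 2/(2*(a+d))],
    ![-(d * p 2/(2*(a+d))), d*p 2/(2*a*(a+d)) - a*p 2/(2*(a+d)),
      d*(3*d*p 3 + a*(a+d)*p 1)/(2*a^2*(a+d)^2) - (d*p 0 + a*p 1)/(2*(a+d)),
      3*d^2*p 2/(2*a^2*(a+d)^2) - d*r/(a*(a+d))],
    ![d^2*p 0/(a+d)^2 + a^2*p 1/(a+d)^2 + a*d*(p 0 + p 1)/(a+d)^2,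
      (a*(p 0 - p 1) - p 3)/(a+d), b, -(p 1/(a+d)) - 3*d*p 3/(a*(a+d)^2)],
    ![0, 0, -(d*p 3/(a*(a+d))), r - d*p 2/(a*(a+d))]] := by
  have hdiff : ∀ i : Fin 4, DifferentiableAt ℝ (fun u => chenAvg a b d r u i) p := by
    intro i
    fin_cases i <;>
      (simp only [chenAvg, Fin.zero_eta, Fin.mk_one, Matrix.cons_val_zero, Matrix.cons_val_one,
        Matrix.head_cons, Fin.reduceFinMk, Matrix.cons_val_two, Matrix.tail_cons,
        Matrix.cons_val_three]; fun_prop)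
  have hcomp : ∀ (v : Fin 4 → ℝ) (i : Fin 4),
      fderiv ℝ (chenAvg a b d r) p v i = fderiv ℝ (fun u => chenAvg a b d r u i) p v := by
    intro v i
    rw [show (chenAvg a b d r) = (fun u i => chenAvg a b d r u i) from rfl, fderiv_pi hdiff]
    simp
  ext i j
  rw [jacobian, Matrix.of_apply, hcomp]
  fin_cases i <;> fin_cases j <;>
    simp only [Fin.zero_eta, Fin.mk_one, Fin.reduceFinMk, Matrix.of_apply, Matrix.cons_val_zero,
      Matrix.cons_val_one, Matrix.head_cons, Matrix.cons_val_two, Matrix.tail_cons,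
      Matrix.cons_val_three, Matrix.cons_val', Matrix.empty_val', Matrix.cons_val_fin_one]
  · refine fderiv_single_eq _ p (hdiff _) _ _ 0 fun t => ?_
    simp only [chenAvg, Matrix.cons_val_zero, Matrix.cons_val_one, Matrix.head_cons,
      Matrix.cons_val_two, Matrix.tail_cons, Matrix.cons_val_three, Pi.add_apply, Pi.smul_apply,
      Pi.single_apply, smul_eq_mul, Fin.reduceEq, reduceIte]
    field_simp
    try ring
  · refine fderiv_single_eq _ p (hdiff _) _ _ 0 fun t => ?_
    simp only [chenAvg, Matrix.cons_val_zero, Matrix.cons_val_one, Matrix.head_cons,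
      Matrix.cons_val_two, Matrix.tail_cons, Matrix.cons_val_three, Pi.add_apply, Pi.smul_apply,
      Pi.single_apply, smul_eq_mul, Fin.reduceEq, reduceIte]
    field_simp
    try ring
  · refine fderiv_single_eq _ p (hdiff _) _ _ 0 fun t => ?_
    simp only [chenAvg, Matrix.cons_val_zero, Matrix.cons_val_one, Matrix.head_cons,
      Matrix.cons_val_two, Matrix.tail_cons, Matrix.cons_val_three, Pi.add_apply, Pi.smul_apply,
      Pi.single_apply, smul_eq_mul, Fin.reduceEq, reduceIte]
    field_simp
    try ring
  · refine fderiv_single_eq _ p (hdiff _) _ _ 0 fun t => ?_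
    simp only [chenAvg, Matrix.cons_val_zero, Matrix.cons_val_one, Matrix.head_cons,
      Matrix.cons_val_two, Matrix.tail_cons, Matrix.cons_val_three, Pi.add_apply, Pi.smul_apply,
      Pi.single_apply, smul_eq_mul, Fin.reduceEq, reduceIte]
    field_simp
    try ring
  · refine fderiv_single_eq _ p (hdiff _) _ _ 0 fun t => ?_
    simp only [chenAvg, Matrix.cons_val_zero, Matrix.cons_val_one, Matrix.head_cons,
      Matrix.cons_val_two, Matrix.tail_cons, Matrix.cons_val_three, Pi.add_apply, Pi.smul_apply,
      Pi.single_apply, smul_eq_mul, Fin.reduceEq, reduceIte]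
    field_simp
    try ring
  · refine fderiv_single_eq _ p (hdiff _) _ _ 0 fun t => ?_
    simp only [chenAvg, Matrix.cons_val_zero, Matrix.cons_val_one, Matrix.head_cons,
      Matrix.cons_val_two, Matrix.tail_cons, Matrix.cons_val_three, Pi.add_apply, Pi.smul_apply,
      Pi.single_apply, smul_eq_mul, Fin.reduceEq, reduceIte]
    field_simp
    try ring
  · refine fderiv_single_eq _ p (hdiff _) _ _ 0 fun t => ?_
    simp only [chenAvg, Matrix.cons_val_zero, Matrix.cons_val_one, Matrix.head_cons,
      Matrix.cons_val_two, Matrix.tail_cons, Matrix.cons_val_three, Pi.add_apply, Pi.smul_apply,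
      Pi.single_apply, smul_eq_mul, Fin.reduceEq, reduceIte]
    field_simp
    try ring
  · refine fderiv_single_eq _ p (hdiff _) _ _ 0 fun t => ?_
    simp only [chenAvg, Matrix.cons_val_zero, Matrix.cons_val_one, Matrix.head_cons,
      Matrix.cons_val_two, Matrix.tail_cons, Matrix.cons_val_three, Pi.add_apply, Pi.smul_apply,
      Pi.single_apply, smul_eq_mul, Fin.reduceEq, reduceIte]
    field_simp
    try ring
  · refine fderiv_single_eq _ p (hdiff _) _ _ ((d^2+a*d)/(2*(a+d)^2)) fun t => ?_
    simp only [chenAvg, Matrix.cons_val_zero, Matrix.cons_val_one, Matrix.head_cons,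
      Matrix.cons_val_two, Matrix.tail_cons, Matrix.cons_val_three, Pi.add_apply, Pi.smul_apply,
      Pi.single_apply, smul_eq_mul, Fin.reduceEq, reduceIte]
    field_simp
    try ring
  · refine fderiv_single_eq _ p (hdiff _) _ _ (-((a^2+a*d)/(2*(a+d)^2))) fun t => ?_
    simp only [chenAvg, Matrix.cons_val_zero, Matrix.cons_val_one, Matrix.head_cons,
      Matrix.cons_val_two, Matrix.tail_cons, Matrix.cons_val_three, Pi.add_apply, Pi.smul_apply,
      Pi.single_apply, smul_eq_mul, Fin.reduceEq, reduceIte]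
    field_simp
    try ring
  · refine fderiv_single_eq _ p (hdiff _) _ _ 0 fun t => ?_
    simp only [chenAvg, Matrix.cons_val_zero, Matrix.cons_val_one, Matrix.head_cons,
      Matrix.cons_val_two, Matrix.tail_cons, Matrix.cons_val_three, Pi.add_apply, Pi.smul_apply,
      Pi.single_apply, smul_eq_mul, Fin.reduceEq, reduceIte]
    field_simp
    try ring
  · refine fderiv_single_eq _ p (hdiff _) _ _ (-(3*d/(2*a*(a+d)^2))) fun t => ?_
    simp only [chenAvg, Matrix.cons_val_zero, Matrix.cons_val_one, Matrix.head_cons,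
      Matrix.cons_val_two, Matrix.tail_cons, Matrix.cons_val_three, Pi.add_apply, Pi.smul_apply,
      Pi.single_apply, smul_eq_mul, Fin.reduceEq, reduceIte]
    field_simp
    try ring
  · refine fderiv_single_eq _ p (hdiff _) _ _ 0 fun t => ?_
    simp only [chenAvg, Matrix.cons_val_zero, Matrix.cons_val_one, Matrix.head_cons,
      Matrix.cons_val_two, Matrix.tail_cons, Matrix.cons_val_three, Pi.add_apply, Pi.smul_apply,
      Pi.single_apply, smul_eq_mul, Fin.reduceEq, reduceIte, Matrix.vecHead]
    field_simp
    try ring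
  · refine fderiv_single_eq _ p (hdiff _) _ _ 0 fun t => ?_
    simp only [chenAvg, Matrix.cons_val_zero, Matrix.cons_val_one, Matrix.head_cons,
      Matrix.cons_val_two, Matrix.tail_cons, Matrix.cons_val_three, Pi.add_apply, Pi.smul_apply,
      Pi.single_apply, smul_eq_mul, Fin.reduceEq, reduceIte, Matrix.vecHead]
    field_simp
    try ring
  · refine fderiv_single_eq _ p (hdiff _) _ _ 0 fun t => ?_
    simp only [chenAvg, Matrix.cons_val_zero, Matrix.cons_val_one, Matrix.head_cons,
      Matrix.cons_val_two, Matrix.tail_cons, Matrix.cons_val_three, Pi.add_apply, Pi.smul_apply,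
      Pi.single_apply, smul_eq_mul, Fin.reduceEq, reduceIte, Matrix.vecHead]
    field_simp
    try ring
  · refine fderiv_single_eq _ p (hdiff _) _ _ 0 fun t => ?_
    simp only [chenAvg, Matrix.cons_val_zero, Matrix.cons_val_one, Matrix.head_cons,
      Matrix.cons_val_two, Matrix.tail_cons, Matrix.cons_val_three, Pi.add_apply, Pi.smul_apply,
      Pi.single_apply, smul_eq_mul, Fin.reduceEq, reduceIte, Matrix.vecHead]
    field_simp
    try ring

open Polynomial

set_option maxHeartbeats 1000000 in
lemma cp_eqR (a b d r s' : ℝ) (ha : a ≠ 0) (hd : d ≠ 0) (hK : a + d ≠ 0) :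
    (Matrix.of
  ![![r/2 + a^2*r/(2*d), -(a^2*r/(2*d)), -(s'/(a+d)), -(r/(2*(a+d))) - a*r/(2*d)],
    ![-(a*r/2), r/2 - a^2*r/(2*d), d*s'/(a*(a+d)), d*r/(2*a*(a+d))],
    ![0, 0, b, -(2*s'/(a+d))],
    ![(0:ℝ), 0, -s', 0]]).charpoly =
    (X^2 - C b * X - C (2*s'^2/(a+d))) *
    (X^2 - C r * X + C (r^2/4*(1 - a^3*(a+d)/d^2))) := by
  rw [Matrix.charpoly, det_fin_four]
  simp only [Matrix.charmatrix_apply, Matrix.diagonal_apply, Matrix.of_apply,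
    Matrix.cons_val_zero, Matrix.cons_val_one, Matrix.head_cons, Matrix.cons_val_two,
    Matrix.tail_cons, Matrix.cons_val_three, Fin.reduceEq, reduceIte, map_zero, map_neg,
    neg_zero, sub_zero, zero_sub, Matrix.cons_val', Matrix.empty_val', Matrix.cons_val_fin_one,
    Matrix.vecHead]
  apply Polynomial.funext
  intro z
  simp only [eval_mul, eval_add, eval_sub, eval_pow, eval_X, eval_C, eval_neg, eval_ofNat, eval_zero]
  field_simp
  ring

lemma jac_at_point (a b d r s' : ℝ) (ha : a ≠ 0) (hd : d ≠ 0) (hK : a + d ≠ 0) :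
    jacobian (chenAvg a b d r) ![a*s'/d, -s', a*(a+d)*r/d, a*(a+d)*s'/d] = Matrix.of
  ![![r/2 + a^2*r/(2*d), -(a^2*r/(2*d)), -(s'/(a+d)), -(r/(2*(a+d))) - a*r/(2*d)],
    ![-(a*r/2), r/2 - a^2*r/(2*d), d*s'/(a*(a+d)), d*r/(2*a*(a+d))],
    ![0, 0, b, -(2*s'/(a+d))],
    ![(0:ℝ), 0, -s', 0]] := by
  rw [jac_eq a b d r ha hK]
  ext i j
  fin_cases i <;> fin_cases j <;>
    simp only [Matrix.of_apply, Matrix.cons_val_zero, Matrix.cons_val_one, Matrix.head_cons,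
      Matrix.cons_val_two, Matrix.tail_cons, Matrix.cons_val_three, Fin.zero_eta, Fin.mk_one,
      Fin.reduceFinMk, Matrix.cons_val', Matrix.empty_val', Matrix.cons_val_fin_one] <;>
    first
      | rfl
      | (field_simp; try ring)
      | ring

open Polynomial in
lemma quad_factor (z1 z2 : ℂ) : (X - C z1) * (X - C z2) = X^2 - C (z1+z2) * X + C (z1*z2) := by
  simp only [Polynomial.C_add, Polynomial.C_mul]
  ring

open Polynomial in
theorem chen_averaged_jacobian_eigenvalues (a b d r : ℝ)
    (hneg : a * (a + d) < 0) (hpos : 0 < b * (a + d) * r)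
    (Ω : ℝ) (hΩ : Ω = Real.sqrt (-(a * (a + d))))
    (s : ℝ) (hs : s = Real.sqrt (b * (a + d) * r))
    (p₁ p₂ : Fin 4 → ℝ)
    (hp₁ : p₁ = ![a * s / d, -s, a * (a + d) * r / d, a * (a + d) * s / d])
    (hp₂ : p₂ = ![-(a * s / d), s, a * (a + d) * r / d, -(a * (a + d) * s / d)])
    (sq : ℂ) (hsq : sq ^ 2 = ((b * (b + 8 * r) : ℝ) : ℂ)) :
    ∀ p ∈ ({p₁, p₂} : Set (Fin 4 → ℝ)),
      ((jacobian (chenAvg a b d r) p).map ((↑) : ℝ → ℂ)).charpoly =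
        (X ^ 2 - C (b : ℂ) * X - C ((2 * b * r : ℝ) : ℂ)) *
          (X ^ 2 - C (r : ℂ) * X + C ((r ^ 2 / 4 * (1 + a ^ 2 * Ω ^ 2 / d ^ 2) : ℝ) : ℂ)) ∧
      ((jacobian (chenAvg a b d r) p).map ((↑) : ℝ → ℂ)).charpoly.roots =
        {((b : ℂ) + sq) / 2, ((b : ℂ) - sq) / 2,
          (r : ℂ) / 2 * (1 + Complex.I * a * Ω / d),
          (r : ℂ) / 2 * (1 - Complex.I * a * Ω / d)} := by
  have ha : a ≠ 0 := fun h => by rw [h, zero_mul] at hneg; exact lt_irrefl 0 hneg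
  have hK : a + d ≠ 0 := fun h => by rw [h, mul_zero] at hneg; exact lt_irrefl 0 hneg
  have hd : d ≠ 0 := fun h => by subst h; nlinarith [mul_self_nonneg a, sq_nonneg a]
  have hΩ2 : Ω^2 = -(a*(a+d)) := by rw [hΩ]; exact Real.sq_sqrt (by linarith)
  have hs2 : s^2 = b*(a+d)*r := by rw [hs]; exact Real.sq_sqrt hpos.le
  have key : ∀ s' : ℝ, s'^2 = b*(a+d)*r →
      ((jacobian (chenAvg a b d r)
          ![a*s'/d, -s', a*(a+d)*r/d, a*(a+d)*s'/d]).map ((↑) : ℝ → ℂ)).charpoly =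
        (X ^ 2 - C (b : ℂ) * X - C ((2 * b * r : ℝ) : ℂ)) *
          (X ^ 2 - C (r : ℂ) * X + C ((r ^ 2 / 4 * (1 + a ^ 2 * Ω ^ 2 / d ^ 2) : ℝ) : ℂ)) := by
    intro s' hs2'
    rw [jac_at_point a b d r s' ha hd hK]
    have h := cp_eqR a b d r s' ha hd hK
    have hc1 : (2*s'^2/(a+d) : ℝ) = 2*b*r := by
      rw [hs2']; field_simp
    have hc2 : (r^2/4*(1 - a^3*(a+d)/d^2) : ℝ) = r^2/4*(1 + a^2*Ω^2/d^2) := by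
      rw [hΩ2]; ring
    rw [hc1, hc2] at h
    rw [show ((Matrix.of
      ![![r/2 + a^2*r/(2*d), -(a^2*r/(2*d)), -(s'/(a+d)), -(r/(2*(a+d))) - a*r/(2*d)],
        ![-(a*r/2), r/2 - a^2*r/(2*d), d*s'/(a*(a+d)), d*r/(2*a*(a+d))],
        ![0, 0, b, -(2*s'/(a+d))],
        ![(0:ℝ), 0, -s', 0]]).map ((↑) : ℝ → ℂ))
      = (Matrix.of
      ![![r/2 + a^2*r/(2*d), -(a^2*r/(2*d)), -(s'/(a+d)), -(r/(2*(a+d))) - a*r/(2*d)],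
        ![-(a*r/2), r/2 - a^2*r/(2*d), d*s'/(a*(a+d)), d*r/(2*a*(a+d))],
        ![0, 0, b, -(2*s'/(a+d))],
        ![(0:ℝ), 0, -s', 0]]).map Complex.ofRealHom from rfl]
    rw [Matrix.charpoly_map, h]
    simp only [Polynomial.map_mul, Polynomial.map_sub, Polynomial.map_add, Polynomial.map_pow,
      Polynomial.map_X, Polynomial.map_C, Complex.coe_algebraMap]
    norm_num
  have hroots : ((X ^ 2 - C (b : ℂ) * X - C ((2 * b * r : ℝ) : ℂ)) *
      (X ^ 2 - C (r : ℂ) * X + C ((r ^ 2 / 4 * (1 + a ^ 2 * Ω ^ 2 / d ^ 2) : ℝ) : ℂ))).roots =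
      {((b : ℂ) + sq) / 2, ((b : ℂ) - sq) / 2,
        (r : ℂ) / 2 * (1 + Complex.I * a * Ω / d),
        (r : ℂ) / 2 * (1 - Complex.I * a * Ω / d)} := by
    have hq1 : X ^ 2 - C (b : ℂ) * X - C ((2 * b * r : ℝ) : ℂ) =
        (X - C (((b:ℂ) + sq)/2)) * (X - C (((b:ℂ) - sq)/2)) := by
      rw [quad_factor]
      have e1 : ((b:ℂ) + sq)/2 + ((b:ℂ) - sq)/2 = (b:ℂ) := by ring
      have e2 : (((b:ℂ) + sq)/2) * (((b:ℂ) - sq)/2) = -((2 * b * r : ℝ) : ℂ) := by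
        have hsq' : sq ^ 2 = (b:ℂ) * ((b:ℂ) + 8 * (r:ℂ)) := by rw [hsq]; push_cast; ring
        push_cast
        linear_combination (-(1:ℂ)/4) * hsq'
      rw [e1, e2, map_neg]
      ring
    have hq2 : X ^ 2 - C (r : ℂ) * X + C ((r ^ 2 / 4 * (1 + a ^ 2 * Ω ^ 2 / d ^ 2) : ℝ) : ℂ) =
        (X - C ((r : ℂ) / 2 * (1 + Complex.I * a * Ω / d))) *
        (X - C ((r : ℂ) / 2 * (1 - Complex.I * a * Ω / d))) := by
      rw [quad_factor]
      have e1 : (r : ℂ) / 2 * (1 + Complex.I * a * Ω / d)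
          + (r : ℂ) / 2 * (1 - Complex.I * a * Ω / d) = (r:ℂ) := by ring
      have e2 : ((r : ℂ) / 2 * (1 + Complex.I * a * Ω / d)) *
          ((r : ℂ) / 2 * (1 - Complex.I * a * Ω / d)) =
          ((r ^ 2 / 4 * (1 + a ^ 2 * Ω ^ 2 / d ^ 2) : ℝ) : ℂ) := by
        push_cast
        linear_combination (-(r:ℂ)^2*(a:ℂ)^2*(Ω:ℂ)^2/(4*(d:ℂ)^2)) * Complex.I_sq
      rw [e1, e2]
    rw [hq1, hq2]
    rw [show (X - C (((b:ℂ) + sq)/2)) * (X - C (((b:ℂ) - sq)/2)) *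
        ((X - C ((r : ℂ) / 2 * (1 + Complex.I * a * Ω / d))) *
         (X - C ((r : ℂ) / 2 * (1 - Complex.I * a * Ω / d)))) =
      (({((b : ℂ) + sq) / 2, ((b : ℂ) - sq) / 2,
        (r : ℂ) / 2 * (1 + Complex.I * a * Ω / d),
        (r : ℂ) / 2 * (1 - Complex.I * a * Ω / d)} : Multiset ℂ).map fun z => X - C z).prod by
      simp only [Multiset.insert_eq_cons, Multiset.map_cons, Multiset.map_singleton,
        Multiset.prod_cons, Multiset.prod_singleton]
      ring]
    exact roots_multiset_prod_X_sub_C _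
  intro p hp
  simp only [Set.mem_insert_iff, Set.mem_singleton_iff] at hp
  rcases hp with rfl | rfl
  · rw [hp₁]
    have h1 := key s hs2
    rw [show (![a*s/d, -s, a*(a+d)*r/d, a*(a+d)*s/d] : Fin 4 → ℝ)
        = ![a * s / d, -s, a * (a + d) * r / d, a * (a + d) * s / d] from rfl] at h1
    exact ⟨h1, by rw [h1]; exact hroots⟩
  · rw [hp₂]
    have hs2' : (-s)^2 = b*(a+d)*r := by rw [neg_sq]; exact hs2
    have h2 := key (-s) hs2'
    have hvec : (![-(a * s / d), s, a * (a + d) * r / d, -(a * (a + d) * s / d)] : Fin 4 → ℝ)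
        = ![a*(-s)/d, -(-s), a*(a+d)*r/d, a*(a+d)*(-s)/d] := by
      funext i
      fin_cases i <;>
        simp only [Matrix.cons_val_zero, Matrix.cons_val_one, Matrix.head_cons,
          Matrix.cons_val_two, Matrix.tail_cons, Matrix.cons_val_three, Fin.zero_eta, Fin.mk_one,
          Fin.reduceFinMk] <;>
        ring
    rw [hvec]
    exact ⟨h2, by rw [h2]; exact hroots⟩
end
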